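/- Let A be a 2×2 real matrix with tr(A) < 0 and det(A) > 0, d₁, d₂ > 0, and set Γ = d₁ A₂₂ + d₂ A₁₁. If Γ > 0 and Γ² > 4 d₁ d₂ det(A), then there exists k > 0 such that det(A - diag(d₁ k², d₂ k²)) < 0; in particular L(k) = A - diag(d₁ k², d₂ k²) has a positive real eigenvalue. -/

import Mathlib

/-!
Along the modes, `det L(k) = d₁ d₂ s² - Γ s + det A` with `s = k²`, a quadratic in `s` whose
minimum, attained at `s = Γ / (2 d₁ d₂) > 0`, equals `det A - Γ² / (4 d₁ d₂) < 0`. A real `2 × 2`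
matrix with negative determinant has real eigenvalues of opposite signs, so `L(k)` has a positive
one.
-/

open Matrix

theorem exists_pos_root_of_const_neg {t D : ℝ} (hD : D < 0) :
    ∃ μ : ℝ, 0 < μ ∧ μ ^ 2 - t * μ + D = 0 := by
  have hdisc : 0 ≤ t ^ 2 - 4 * D := by nlinarith [sq_nonneg t]
  set s := √(t ^ 2 - 4 * D)
  have hs : s ^ 2 = t ^ 2 - 4 * D := Real.sq_sqrt hdisc
  have habs : |t| < s := by
    rw [← Real.sqrt_sq_eq_abs]
    exact Real.sqrt_lt_sqrt (sq_nonneg t) (by linarith)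
  refine ⟨(t + s) / 2, by linarith [neg_abs_le t], ?_⟩
  linear_combination hs / 4

namespace Matrix

theorem det_sub_smul_one_fin_two {R : Type*} [CommRing R] (M : Matrix (Fin 2) (Fin 2) R) (μ : R) :
    (M - μ • 1).det = μ ^ 2 - M.trace * μ + M.det := by
  simp only [det_fin_two, trace_fin_two, sub_apply, smul_apply, one_apply_eq, one_apply_ne,
    ne_eq, zero_ne_one, one_ne_zero, not_false_eq_true, smul_eq_mul, mul_one, mul_zero]
  ring

theorem det_sub_diagonal_fin_two {R : Type*} [CommRing R] (M : Matrix (Fin 2) (Fin 2) R)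
    (a b : R) : (M - diagonal ![a, b]).det = M.det - (a * M 1 1 + b * M 0 0) + a * b := by
  simp only [det_fin_two, sub_apply, diagonal_apply_eq, diagonal_apply_ne, cons_val_zero,
    cons_val_one, cons_val_fin_one, ne_eq, zero_ne_one, one_ne_zero, not_false_eq_true, sub_zero]
  ring

theorem exists_pos_eigenvalue_of_det_neg {M : Matrix (Fin 2) (Fin 2) ℝ} (h : M.det < 0) :
    ∃ μ : ℝ, 0 < μ ∧ ∃ x : Fin 2 → ℝ, x ≠ 0 ∧ M *ᵥ x = μ • x := by
  obtain ⟨μ, hμ, hroot⟩ := exists_pos_root_of_const_neg (t := M.trace) h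
  have hsing : (M - μ • 1).det = 0 := by rw [det_sub_smul_one_fin_two, hroot]
  obtain ⟨x, hx, hker⟩ := exists_mulVec_eq_zero_iff.mpr hsing
  refine ⟨μ, hμ, x, hx, ?_⟩
  rwa [sub_mulVec, smul_mulVec, one_mulVec, sub_eq_zero] at hker

end Matrix

theorem exists_det_sub_diffusion_neg (A : Matrix (Fin 2) (Fin 2) ℝ) {d₁ d₂ : ℝ}
    (hd : 0 < d₁ * d₂) (hΓ : 0 < d₁ * A 1 1 + d₂ * A 0 0)
    (hΓ2 : 4 * d₁ * d₂ * A.det < (d₁ * A 1 1 + d₂ * A 0 0) ^ 2) :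
    ∃ k : ℝ, 0 < k ∧ (A - diagonal ![d₁ * k ^ 2, d₂ * k ^ 2]).det < 0 := by
  set Γ := d₁ * A 1 1 + d₂ * A 0 0
  set s := Γ / (2 * (d₁ * d₂))
  have hs : 0 < s := by positivity
  have hsΓ : 2 * (d₁ * d₂) * s = Γ := mul_div_cancel₀ Γ (by positivity)
  refine ⟨√s, Real.sqrt_pos.mpr hs, ?_⟩
  have hmin : 4 * (d₁ * d₂) * (A.det - (d₁ * s * A 1 1 + d₂ * s * A 0 0) + d₁ * s * (d₂ * s)) =
      4 * d₁ * d₂ * A.det - Γ ^ 2 := by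
    linear_combination (2 * (d₁ * d₂) * s - Γ) * hsΓ
  rw [det_sub_diagonal_fin_two, Real.sq_sqrt hs.le]
  exact neg_of_mul_neg_right (by linarith) (by positivity : (0 : ℝ) ≤ 4 * (d₁ * d₂))

theorem stmt_6_general (A : Matrix (Fin 2) (Fin 2) ℝ) (d₁ d₂ : ℝ) (hd₁ : 0 < d₁) (hd₂ : 0 < d₂)
    (hΓ : 0 < d₁ * A 1 1 + d₂ * A 0 0)
    (hΓ2 : (d₁ * A 1 1 + d₂ * A 0 0) ^ 2 > 4 * d₁ * d₂ * A.det) :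
    ∃ k : ℝ, 0 < k ∧
      (A - Matrix.diagonal ![d₁ * k ^ 2, d₂ * k ^ 2]).det < 0 ∧
      ∃ lam : ℝ, 0 < lam ∧ ∃ x : Fin 2 → ℝ, x ≠ 0 ∧
        (A - Matrix.diagonal ![d₁ * k ^ 2, d₂ * k ^ 2]).mulVec x = lam • x := by
  obtain ⟨k, hk, hdetL⟩ := exists_det_sub_diffusion_neg A (mul_pos hd₁ hd₂) hΓ hΓ2
  exact ⟨k, hk, hdetL, exists_pos_eigenvalue_of_det_neg hdetL⟩

/-- Turing instability criterion: if `tr A < 0`, `det A > 0`, `Γ > 0` and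
`Γ² > 4 d₁ d₂ det A`, then some mode `k > 0` has `det L(k) < 0` and `L(k)` has a
positive real eigenvalue. -/
theorem stmt_6 (A : Matrix (Fin 2) (Fin 2) ℝ) (d₁ d₂ : ℝ) (hd₁ : 0 < d₁) (hd₂ : 0 < d₂)
    (htr : A.trace < 0) (hdet : 0 < A.det)
    (hΓ : 0 < d₁ * A 1 1 + d₂ * A 0 0)
    (hΓ2 : (d₁ * A 1 1 + d₂ * A 0 0) ^ 2 > 4 * d₁ * d₂ * A.det) :
    ∃ k : ℝ, 0 < k ∧
      (A - Matrix.diagonal ![d₁ * k ^ 2, d₂ * k ^ 2]).det < 0 ∧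
      ∃ lam : ℝ, 0 < lam ∧ ∃ x : Fin 2 → ℝ, x ≠ 0 ∧
        (A - Matrix.diagonal ![d₁ * k ^ 2, d₂ * k ^ 2]).mulVec x = lam • x :=
  stmt_6_general A d₁ d₂ hd₁ hd₂ hΓ hΓ2
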